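/- arXiv:1904.10122 — 11 statements merged into one kernel-verified Lean document; each statement's English description precedes it below -/
import Mathlib

section
/- Let X be a set, C a concept class on X, and H a hypothesis class with C ⊆ H ⊆ P(X). If the equivalence-query learning complexity LC^EQ(C, H) is at most d+1, then the Littlestone dimension of C is at most d. -/
/-!
Definitions for query learning: concepts are total functions `X → Bool`,
partially specified subsets are functions `X → Option Bool`.
-/

/-- A total concept `f` extends the partially specified subset `A`
(i.e. agrees with `A` on its domain). -/
def PExtends {X : Type*} (f : X → Bool) (A : X → Option Bool) : Prop :=
  ∀ x b, A x = some b → f x = b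

/-- `A` is `n`-consistent with `C`: every restriction of `A` of size at most `n`
has an extension in `C`. -/
def NConsistent {X : Type*} (C : Set (X → Bool)) (A : X → Option Bool) (n : ℕ) : Prop :=
  ∀ s : Finset X, s.card ≤ n → ∃ f ∈ C, ∀ x ∈ s, ∀ b, A x = some b → f x = b

/-- `A` is finitely consistent with `C`: every finite restriction of `A`
has an extension in `C`. -/
def FinitelyConsistent {X : Type*} (C : Set (X → Bool)) (A : X → Option Bool) : Prop :=
  ∀ s : Finset X, ∃ f ∈ C, ∀ x ∈ s, ∀ b, A x = some b → f x = b

/-- There is a complete binary tree of height `d`, with internal nodes labelled by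
elements of `X` (here indexed by the binary path leading to the node), whose leaves
can each be properly labelled by a concept of `C` agreeing with the root-to-leaf path. -/
def LdimGe {X : Type*} (C : Set (X → Bool)) (d : ℕ) : Prop :=
  ∃ t : List Bool → X, ∀ σ : List Bool, σ.length = d →
    ∃ f ∈ C, ∀ k, k < d → f (t (σ.take k)) = σ.getD k false

/-- The Littlestone dimension of `C`, valued in `ℕ∞` (`⊤` = no maximum exists). -/
noncomputable def Ldim {X : Type*} (C : Set (X → Bool)) : ℕ∞ :=
  sSup {n : ℕ∞ | ∃ d : ℕ, n = d ∧ LdimGe C d}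

/-- `xs` is a valid sequence of counterexamples that an adversarial teacher with
target concept `A` can return against the learner strategy `s` (the learner's next
hypothesis is a function of the list of counterexamples received so far). -/
def ValidEQPlay {X : Type*} (A : X → Bool) (s : List X → (X → Bool)) (xs : List X) : Prop :=
  ∀ (i : ℕ) (h : i < xs.length),
    s (xs.take i) (xs.get ⟨i, h⟩) ≠ A (xs.get ⟨i, h⟩)

/-- Some learner strategy with hypotheses from `H` identifies every concept of `C`
in at most `n` equivalence queries, against every teacher. -/
def EQLearnIn {X : Type*} (C H : Set (X → Bool)) (n : ℕ) : Prop :=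
  ∃ s : List X → (X → Bool), (∀ l, s l ∈ H) ∧
    ∀ A ∈ C, ∀ xs : List X, ValidEQPlay A s xs → xs.length < n

/-- The equivalence-query learning complexity `LC^EQ(C, H)`, valued in `ℕ∞`. -/
noncomputable def LCEQ {X : Type*} (C H : Set (X → Bool)) : ℕ∞ :=
  sInf {n : ℕ∞ | ∃ m : ℕ, n = m ∧ EQLearnIn C H m}

/-- `xs` is a valid play of a teacher with target `A` against the EQ+MQ learner
strategy `s`: the history records pairs `(x, A x)`; at each step, if the learner
makes the membership query `x` the teacher answers `(x, A x)`, and if the learner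
makes an equivalence query `B` the teacher returns a counterexample to `B`. -/
def ValidEMPlay {X : Type*} (A : X → Bool) (s : List (X × Bool) → X ⊕ (X → Bool))
    (xs : List (X × Bool)) : Prop :=
  ∀ (i : ℕ) (h : i < xs.length),
    (xs.get ⟨i, h⟩).2 = A (xs.get ⟨i, h⟩).1 ∧
    (∀ x, s (xs.take i) = Sum.inl x → (xs.get ⟨i, h⟩).1 = x) ∧
    (∀ B, s (xs.take i) = Sum.inr B → B (xs.get ⟨i, h⟩).1 ≠ A (xs.get ⟨i, h⟩).1)

/-- Some learner strategy making membership queries on elements of `X` and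
equivalence queries from `H` identifies every concept of `C` in at most `n`
queries in total, against every teacher. -/
def EMLearnIn {X : Type*} (C H : Set (X → Bool)) (n : ℕ) : Prop :=
  ∃ s : List (X × Bool) → X ⊕ (X → Bool),
    (∀ l B, s l = Sum.inr B → B ∈ H) ∧
    ∀ A ∈ C, ∀ xs : List (X × Bool), ValidEMPlay A s xs → xs.length < n

/-- The EQ+MQ learning complexity `LC^{EQ+MQ}(C, H)`, valued in `ℕ∞`. -/
noncomputable def LCEM {X : Type*} (C H : Set (X → Bool)) : ℕ∞ :=
  sInf {n : ℕ∞ | ∃ m : ℕ, n = m ∧ EMLearnIn C H m}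

/-- Every total function `X → Bool` that is `n`-consistent with `C` belongs to `H`. -/
def CDimLe {X : Type*} (C H : Set (X → Bool)) (n : ℕ) : Prop :=
  ∀ A : X → Bool, NConsistent C (fun x => some (A x)) n → A ∈ H

/-- The consistency dimension `C(C, H)`, valued in `ℕ∞`. -/
noncomputable def CDim {X : Type*} (C H : Set (X → Bool)) : ℕ∞ :=
  sInf {n : ℕ∞ | ∃ m : ℕ, n = m ∧ CDimLe C H m}

/-- Every partially specified subset that is `n`-consistent with `C` has a total
extension in `H`. -/
def SCDimLe {X : Type*} (C H : Set (X → Bool)) (n : ℕ) : Prop :=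
  ∀ A : X → Option Bool, NConsistent C A n → ∃ B ∈ H, PExtends B A

/-- The strong consistency dimension `SC(C, H)`, valued in `ℕ∞`. -/
noncomputable def SCDim {X : Type*} (C H : Set (X → Bool)) : ℕ∞ :=
  sInf {n : ℕ∞ | ∃ m : ℕ, n = m ∧ SCDimLe C H m}


/-!
An adversarial teacher walks down a Littlestone tree of height `e`: at each node it returns
the node's element as a counterexample, labelled against the learner's current hypothesis,
and moves to the corresponding child. The leaf reached is labelled by a concept of `C`
consistent with all `e` answers, so every learner needs more than `e` queries.
-/

theorem validEQPlay_cons_iff {X : Type*} (A : X → Bool) (s : List X → (X → Bool))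
    (x : X) (xs : List X) :
    ValidEQPlay A s (x :: xs) ↔ s [] x ≠ A x ∧ ValidEQPlay A (fun l => s (x :: l)) xs := by
  constructor
  · intro h
    exact ⟨h 0 (Nat.succ_pos _), fun i hi => h (i + 1) (Nat.succ_lt_succ hi)⟩
  · rintro ⟨h₀, h⟩ (_ | i) hi
    · exact h₀
    · exact h i (Nat.lt_of_succ_lt_succ hi)

theorem ldimGe_sep_root {X : Type*} {C : Set (X → Bool)} {e : ℕ} {t : List Bool → X}
    (ht : ∀ σ : List Bool, σ.length = e + 1 →
      ∃ f ∈ C, ∀ k, k < e + 1 → f (t (σ.take k)) = σ.getD k false)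
    (b : Bool) : LdimGe {f ∈ C | f (t []) = b} e := by
  refine ⟨fun σ => t (b :: σ), fun σ hσ => ?_⟩
  obtain ⟨f, hfC, hf⟩ := ht (b :: σ) (by simp [hσ])
  exact ⟨f, ⟨hfC, hf 0 (Nat.succ_pos e)⟩, fun k hk => hf (k + 1) (Nat.succ_lt_succ hk)⟩

theorem LdimGe.exists_validEQPlay {X : Type*} {C : Set (X → Bool)} {e : ℕ}
    (hC : LdimGe C e) (s : List X → (X → Bool)) :
    ∃ f ∈ C, ∃ xs : List X, ValidEQPlay f s xs ∧ xs.length = e := by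
  induction e generalizing C s with
  | zero =>
    obtain ⟨t, ht⟩ := hC
    obtain ⟨f, hfC, -⟩ := ht [] rfl
    exact ⟨f, hfC, [], fun i hi => absurd hi (Nat.not_lt_zero i), rfl⟩
  | succ e ih =>
    obtain ⟨t, ht⟩ := hC
    obtain ⟨f, ⟨hfC, hf⟩, xs, hplay, hlen⟩ :=
      ih (ldimGe_sep_root ht (!s [] (t []))) (fun l => s (t [] :: l))
    refine ⟨f, hfC, t [] :: xs, (validEQPlay_cons_iff f s _ xs).2 ⟨?_, hplay⟩, by simp [hlen]⟩
    simp [hf]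

theorem LdimGe.lt_of_eqLearnIn {X : Type*} {C H : Set (X → Bool)} {e m : ℕ}
    (hC : LdimGe C e) (hL : EQLearnIn C H m) : e < m := by
  obtain ⟨s, -, hs⟩ := hL
  obtain ⟨f, hfC, xs, hplay, rfl⟩ := hC.exists_validEQPlay s
  exact hs f hfC xs hplay

theorem LdimGe.lt_lceq {X : Type*} {C : Set (X → Bool)} (H : Set (X → Bool)) {e : ℕ}
    (hC : LdimGe C e) : (e : ℕ∞) < LCEQ C H := by
  rw [← ENat.add_one_le_iff (ENat.natCast_ne_top e)]
  refine le_sInf ?_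
  rintro _ ⟨m, rfl, hm⟩
  exact_mod_cast hC.lt_of_eqLearnIn hm

theorem stmt_0_general {X : Type*} (C H : Set (X → Bool)) (d : ℕ)
    (h : LCEQ C H ≤ (d : ℕ∞) + 1) : Ldim C ≤ (d : ℕ∞) := by
  refine sSup_le ?_
  rintro _ ⟨e, rfl, hC⟩
  exact ENat.natCast_lt_add_one_iff.mp ((hC.lt_lceq H).trans_le h)

theorem stmt_0 {X : Type*} (C H : Set (X → Bool)) (hCH : C ⊆ H) (d : ℕ)
    (h : LCEQ C H ≤ (d : ℕ∞) + 1) : Ldim C ≤ (d : ℕ∞) :=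
  stmt_0_general C H d h
end

section
/- Let X be a set and C a concept class on X with Littlestone dimension Ldim(C) = d < ∞. Then C is learnable with equivalence queries from the full hypothesis class P(X) in at most d+1 queries; that is, LC^EQ(C, P(X)) ≤ d+1. -/
section SOA

open Classical in
/-- Hypothesis bit: predict `true` at `x` iff the `true`-restriction still has a tree of height `m`. -/
noncomputable def hypOf {X : Type*} (V : Set (X → Bool)) (m : ℕ) (x : X) : Bool :=
  if LdimGe (V ∩ {f | f x = true}) m then true else false

/-- One step of the version-space refinement. -/
noncomputable def stepF {X : Type*} (p : Set (X → Bool) × ℕ) (x : X) : Set (X → Bool) × ℕ :=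
  (p.1 ∩ {f | f x = ! hypOf p.1 p.2 x}, p.2 - 1)

noncomputable def verm {X : Type*} (C : Set (X → Bool)) (d : ℕ) (l : List X) :
    Set (X → Bool) × ℕ :=
  l.foldl stepF (C, d)

lemma verm_snd_aux {X : Type*} : ∀ (l : List X) (p : Set (X → Bool) × ℕ),
    (l.foldl stepF p).2 = p.2 - l.length := by
  intro l
  induction l with
  | nil => intro p; simp
  | cons x l ih =>
    intro p
    simp only [List.foldl_cons, ih, stepF, List.length_cons]
    omega

lemma verm_snd {X : Type*} (C : Set (X → Bool)) (d : ℕ) (l : List X) :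
    (verm C d l).2 = d - l.length := verm_snd_aux l (C, d)

lemma verm_append {X : Type*} (C : Set (X → Bool)) (d : ℕ) (l : List X) (x : X) :
    verm C d (l ++ [x]) = stepF (verm C d l) x := by
  simp [verm, List.foldl_append]

/-- Splitting lemma: if both restrictions have a tree of height `m`, the whole has height `m+1`. -/
lemma ldimGe_split {X : Type*} (V : Set (X → Bool)) (x : X) (m : ℕ)
    (h0 : LdimGe (V ∩ {f | f x = false}) m) (h1 : LdimGe (V ∩ {f | f x = true}) m) :
    LdimGe V (m + 1) := by
  obtain ⟨t0, ht0⟩ := h0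
  obtain ⟨t1, ht1⟩ := h1
  refine ⟨fun σ => σ.casesOn x (fun b σ' => if b then t1 σ' else t0 σ'), ?_⟩
  intro σ hσ
  match σ with
  | [] => simp at hσ
  | b :: σ' =>
    have hlen : σ'.length = m := by simpa using hσ
    cases b with
    | false =>
      obtain ⟨f, hf, hfk⟩ := ht0 σ' hlen
      refine ⟨f, hf.1, ?_⟩
      intro k hk
      match k with
      | 0 => simpa using hf.2
      | k + 1 =>
        have := hfk k (by omega)
        simpa using this
    | true =>
      obtain ⟨f, hf, hfk⟩ := ht1 σ' hlen
      refine ⟨f, hf.1, ?_⟩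
      intro k hk
      match k with
      | 0 => simpa using hf.2
      | k + 1 =>
        have := hfk k (by omega)
        simpa using this

lemma step_not {X : Type*} (V : Set (X → Bool)) (m : ℕ) (x : X)
    (h : ¬ LdimGe V (m + 1)) :
    ¬ LdimGe (V ∩ {f | f x = ! hypOf V m x}) m := by
  unfold hypOf
  split_ifs with h1
  · intro h0
    exact h (ldimGe_split V x m (by simpa using h0) h1)
  · simpa using h1

end SOA

theorem stmt_1_aux {X : Type*} (C : Set (X → Bool)) (d : ℕ) (h : Ldim C = (d : ℕ∞)) :
    LCEQ C Set.univ ≤ (d : ℕ∞) + 1 := by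
  have hnot : ¬ LdimGe C (d + 1) := by
    intro hge
    have hle : ((d + 1 : ℕ) : ℕ∞) ≤ Ldim C := le_sSup ⟨d + 1, rfl, hge⟩
    rw [h] at hle
    have : (d + 1 : ℕ) ≤ d := by exact_mod_cast hle
    omega
  set s : List X → (X → Bool) := fun l => hypOf (verm C d l).1 (verm C d l).2 with hs
  have hlearn : EQLearnIn C Set.univ (d + 1) := by
    refine ⟨s, fun l => Set.mem_univ _, ?_⟩
    intro A hA xs hplay
    by_contra hlen
    push_neg at hlen
    -- invariant
    have key : ∀ i, i ≤ xs.length →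
        A ∈ (verm C d (xs.take i)).1 ∧ (i ≤ d + 1 → ¬ LdimGe (verm C d (xs.take i)).1 (d + 1 - i)) := by
      intro i
      induction i with
      | zero =>
        intro _
        exact ⟨hA, fun _ => by simpa [verm] using hnot⟩
      | succ i ih =>
        intro hi1
        have hi : i < xs.length := by omega
        obtain ⟨hmem, hdim⟩ := ih (by omega)
        have htake : xs.take (i + 1) = xs.take i ++ [xs.get ⟨i, hi⟩] := by
          rw [List.take_succ]
          simp [List.getElem?_eq_getElem hi, List.get_eq_getElem]
        have hv : verm C d (xs.take (i + 1)) = stepF (verm C d (xs.take i)) (xs.get ⟨i, hi⟩) := by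
          rw [htake, verm_append]
        have hAx : A (xs.get ⟨i, hi⟩) =
            ! hypOf (verm C d (xs.take i)).1 (verm C d (xs.take i)).2 (xs.get ⟨i, hi⟩) := by
          have := hplay i hi
          rw [hs] at this
          revert this
          cases hA1 : A (xs.get ⟨i, hi⟩) <;>
            cases hB1 : hypOf (verm C d (xs.take i)).1 (verm C d (xs.take i)).2 (xs.get ⟨i, hi⟩) <;>
            simp_all
        constructor
        · rw [hv]
          exact ⟨hmem, hAx⟩
        · intro hid
          have hid' : i ≤ d := by omega
          have h2 : (verm C d (xs.take i)).2 = d - i := by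
            rw [verm_snd, List.length_take]
            omega
          have hstep := step_not (verm C d (xs.take i)).1 (d - i) (xs.get ⟨i, hi⟩)
            (by
              have : d - i + 1 = d + 1 - i := by omega
              rw [this]
              exact hdim (by omega))
          rw [hv]
          have : d + 1 - (i + 1) = d - i := by omega
          rw [this]
          simpa [stepF, h2] using hstep
    have hfin := key (d + 1) (by omega)
    obtain ⟨hmem, hdim⟩ := hfin
    have hdim0 := hdim le_rfl
    simp only [Nat.sub_self] at hdim0
    exact hdim0 ⟨fun _ => xs.get ⟨0, by omega⟩, fun σ hσ => ⟨A, hmem, fun k hk => by omega⟩⟩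
  refine sInf_le ⟨d + 1, ?_, hlearn⟩
  push_cast
  ring

theorem stmt_1 {X : Type*} (C : Set (X → Bool)) (d : ℕ) (h : Ldim C = (d : ℕ∞)) :
    LCEQ C Set.univ ≤ (d : ℕ∞) + 1 := by
  exact stmt_1_aux C d h
end

section
/- Let X be a set, C a concept class on X, and H a hypothesis class with C ⊆ H ⊆ P(X). Suppose Ldim(C) = d < ∞ and 1 < C(C, H) = c < ∞. Then LC^EQ(C, H) ≤ c^d. -/
section Aux
variable {X : Type*}

private lemma split_lemma {V : Set (X → Bool)} {k : ℕ} {x : X}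
    (h0 : LdimGe {f | f ∈ V ∧ f x = false} k)
    (h1 : LdimGe {f | f ∈ V ∧ f x = true} k) :
    LdimGe V (k + 1) := by
  obtain ⟨t0, ht0⟩ := h0
  obtain ⟨t1, ht1⟩ := h1
  refine ⟨fun σ => List.casesOn σ x (fun b ρ => cond b (t1 ρ) (t0 ρ)), ?_⟩
  rintro (_ | ⟨b, ρ⟩) hσ
  · simp at hσ
  · have hρ : ρ.length = k := by simpa using hσ
    have key : ∀ (tb : List Bool → X),
        (∀ σ : List Bool, σ.length = k → ∃ f, (f ∈ V ∧ f x = b) ∧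
          ∀ j, j < k → f (tb (σ.take j)) = σ.getD j false) →
        (∀ ρ', tb ρ' = (fun σ => List.casesOn σ x
          (fun b ρ => cond b (t1 ρ) (t0 ρ))) (b :: ρ')) →
        ∃ f ∈ V, ∀ j, j < k + 1 →
          f ((fun σ => List.casesOn σ x (fun b ρ => cond b (t1 ρ) (t0 ρ)))
            ((b :: ρ).take j)) = (b :: ρ).getD j false := by
      intro tb htb heq
      obtain ⟨f, ⟨hfV, hfx⟩, hf⟩ := htb ρ hρ
      refine ⟨f, hfV, ?_⟩
      intro j hj
      match j with
      | 0 => simpa using hfx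
      | j + 1 =>
        have hj' : j < k := by omega
        have := hf j hj'
        rw [heq] at this
        simpa using this
    cases b with
    | false => exact key t0 ht0 (fun ρ' => rfl)
    | true => exact key t1 ht1 (fun ρ' => rfl)

private lemma subsingleton_of_not_ldimGe_one {V : Set (X → Bool)}
    (h : ¬ LdimGe V 1) : V.Subsingleton := by
  intro f hf g hg
  by_contra hfg
  obtain ⟨x, hx⟩ : ∃ x, f x ≠ g x := by
    by_contra hx; push_neg at hx; exact hfg (funext hx)
  apply h
  refine ⟨fun _ => x, ?_⟩
  rintro (_ | ⟨b, σ'⟩) hσ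
  · simp at hσ
  · by_cases hb : f x = b
    · exact ⟨f, hf, by intro k hk; interval_cases k; simpa using hb⟩
    · have : g x = b := by revert hx hb; cases f x <;> cases g x <;> cases b <;> simp
      exact ⟨g, hg, by intro k hk; interval_cases k; simpa using this⟩

private lemma valid_cons {A : X → Bool} {s : List X → X → Bool}
    {x : X} {ys : List X} (h : ValidEQPlay A s (x :: ys)) :
    s [] x ≠ A x ∧ ValidEQPlay A (fun l => s (x :: l)) ys := by
  constructor
  · have := h 0 (by simp)
    simpa using this
  · intro i hi
    have := h (i + 1) (by simpa using Nat.succ_lt_succ hi)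
    simpa using this

end Aux
section Comb
variable {X : Type*}

private lemma comb_left {A : X → Bool} {T₁ T₂ : List X → X → Bool} {N : ℕ}
    (hN : ∀ ys, ValidEQPlay A T₁ ys → ys.length < N)
    {xs : List X}
    (h : ValidEQPlay A (fun l => if l.length < N then T₁ l else T₂ (l.drop N)) xs) :
    xs.length < N := by
  by_contra hlen
  push_neg at hlen
  have hv : ValidEQPlay A T₁ (xs.take N) := by
    intro i hi
    have hiN : i < N := by
      have h1 : (xs.take N).length = N := by simp [List.length_take, Nat.min_eq_left hlen]
      omega
    have hix : i < xs.length := lt_of_lt_of_le hiN hlen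
    have h2 := h i hix
    have htk : (xs.take i).length < N := by
      simp only [List.length_take]; omega
    simp only [if_pos htk] at h2
    have e1 : (xs.take N).take i = xs.take i := by
      rw [List.take_take, Nat.min_eq_left hiN.le]
    have e2 : (xs.take N).get ⟨i, hi⟩ = xs.get ⟨i, hix⟩ := by
      simp [List.get_eq_getElem, List.getElem_take]
    rw [e1, e2]
    exact h2
  have := hN _ hv
  simp [List.length_take, Nat.min_eq_left hlen] at this

private lemma comb_right {A : X → Bool} {T₁ T₂ : List X → X → Bool} {N M : ℕ}
    (hM : ∀ ys, ValidEQPlay A T₂ ys → ys.length < M)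
    {xs : List X}
    (h : ValidEQPlay A (fun l => if l.length < N then T₁ l else T₂ (l.drop N)) xs) :
    xs.length < N + M := by
  by_cases hlen : xs.length < N
  · omega
  push_neg at hlen
  have hv : ValidEQPlay A T₂ (xs.drop N) := by
    intro i hi
    have hix : N + i < xs.length := by
      have : (xs.drop N).length = xs.length - N := by simp
      omega
    have h2 := h (N + i) hix
    have htk : ¬ (xs.take (N + i)).length < N := by
      simp only [List.length_take]; omega
    simp only [if_neg htk] at h2
    have e1 : (xs.take (N + i)).drop N = (xs.drop N).take i := by
      rw [List.drop_take]; congr 1; omega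
    have e2 : (xs.drop N).get ⟨i, hi⟩ = xs.get ⟨N + i, hix⟩ := by
      simp [List.get_eq_getElem, List.getElem_drop]
    rw [e1] at h2
    rw [e2]
    exact h2
  have := hM _ hv
  simp only [List.length_drop] at this
  omega

end Comb

section Main
variable {X : Type*}

private lemma main_lemma {C H : Set (X → Bool)} (hCH : C ⊆ H) {c : ℕ} (hc2 : 2 ≤ c)
    (hcd : CDimLe C H c) (h₀ : X → Bool) (hh₀ : h₀ ∈ H) :
    ∀ (k : ℕ) (V : Set (X → Bool)), V ⊆ C → ¬ LdimGe V (k + 1) →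
      ∃ s : List X → (X → Bool), (∀ l, s l ∈ H) ∧
        ∀ A ∈ V, ∀ xs : List X, ValidEQPlay A s xs → xs.length < c ^ k := by
  intro k
  induction k with
  | zero =>
    intro V hVC hV
    have hsub := subsingleton_of_not_ldimGe_one hV
    by_cases hne : V.Nonempty
    · obtain ⟨g, hg⟩ := hne
      refine ⟨fun _ => g, fun _ => hCH (hVC hg), ?_⟩
      intro A hA xs hxs
      have hAg : A = g := hsub hA hg
      cases xs with
      | nil => simp
      | cons x ys =>
        have h1 := (valid_cons hxs).1
        rw [hAg] at h1
        exact absurd rfl h1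
    · refine ⟨fun _ => h₀, fun _ => hh₀, ?_⟩
      intro A hA
      exact absurd ⟨A, hA⟩ hne
  | succ k IH =>
    intro V hVC hV
    have hBex : ∀ x : X, ∃ b : Bool, ¬ LdimGe {f | f ∈ V ∧ f x = !b} (k + 1) := by
      intro x
      by_contra hx
      push_neg at hx
      have h0 : LdimGe {f | f ∈ V ∧ f x = false} (k + 1) := by simpa using hx true
      have h1 : LdimGe {f | f ∈ V ∧ f x = true} (k + 1) := by simpa using hx false
      exact hV (split_lemma h0 h1)
    choose B hB using hBex
    have hpiece : ∀ x : X, ∃ T : List X → (X → Bool), (∀ l, T l ∈ H) ∧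
        ∀ A ∈ {f | f ∈ V ∧ f x = !B x}, ∀ xs, ValidEQPlay A T xs → xs.length < c ^ k :=
      fun x => IH {f | f ∈ V ∧ f x = !B x} (fun f hf => hVC hf.1) (hB x)
    choose T hT1 hT2 using hpiece
    have hck1 : 1 ≤ c ^ k := Nat.one_le_pow _ _ (by omega)
    have hpow : c ^ (k + 1) = c ^ k * c := pow_succ c k
    by_cases hcons : NConsistent C (fun x => some (B x)) c
    · have hBH : B ∈ H := hcd B hcons
      refine ⟨fun l => List.casesOn l B (fun x l' => T x l'), ?_, ?_⟩
      · rintro (_ | ⟨x, l'⟩)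
        · exact hBH
        · exact hT1 x l'
      · intro A hA xs hxs
        cases xs with
        | nil => simpa using pow_pos (show 0 < c by omega) (k + 1)
        | cons x ys =>
          obtain ⟨hc0, hrest⟩ := valid_cons hxs
          have hc0' : B x ≠ A x := hc0
          have hAx : A x = !B x := by
            revert hc0'
            cases A x <;> cases B x <;> simp
          have hlen := hT2 x A ⟨hA, hAx⟩ ys hrest
          have hle : c ^ k + 1 ≤ c ^ (k + 1) := by rw [hpow]; nlinarith
          simp only [List.length_cons]
          omega
    · obtain ⟨s₀, hs₀card, hs₀⟩ : ∃ s₀ : Finset X, s₀.card ≤ c ∧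
          ∀ f ∈ C, ∃ x ∈ s₀, f x ≠ B x := by
        simp only [NConsistent, not_forall] at hcons
        obtain ⟨s₀, hcard, hbad⟩ := hcons
        push_neg at hbad
        refine ⟨s₀, hcard, ?_⟩
        intro f hf
        obtain ⟨x, hx, b, hb, hfb⟩ := hbad f hf
        obtain rfl : B x = b := by simpa using hb
        exact ⟨x, hx, hfb⟩
      have inner : ∀ L : List X, ∃ S : List X → (X → Bool), (∀ l, S l ∈ H) ∧
          ∀ A ∈ V, (∃ x ∈ L, A x ≠ B x) → ∀ xs, ValidEQPlay A S xs →
            xs.length < L.length * c ^ k := by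
        intro L
        induction L with
        | nil =>
          refine ⟨fun _ => h₀, fun _ => hh₀, ?_⟩
          rintro A hA ⟨x, hx, _⟩ xs _
          simp at hx
        | cons x L' ihL =>
          obtain ⟨S', hS'1, hS'2⟩ := ihL
          refine ⟨fun l => if l.length < c ^ k then T x l else S' (l.drop (c ^ k)), ?_, ?_⟩
          · intro l
            by_cases hl : l.length < c ^ k <;> simp [hl, hT1, hS'1]
          · rintro A hA ⟨x', hx', hAx'⟩ xs hxs
            simp only [List.length_cons]
            rcases List.mem_cons.mp hx' with rfl | hx'L
            · have hAx : A x' = !B x' := by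
                revert hAx'
                cases A x' <;> cases B x' <;> simp
              have := comb_left (fun ys hys => hT2 x' A ⟨hA, hAx⟩ ys hys) hxs
              have : xs.length < c ^ k := this
              nlinarith
            · have := comb_right (fun ys hys => hS'2 A hA ⟨x', hx'L, hAx'⟩ ys hys) hxs
              have h2 : xs.length < c ^ k + L'.length * c ^ k := this
              nlinarith
      obtain ⟨S, hS1, hS2⟩ := inner s₀.toList
      refine ⟨S, hS1, ?_⟩
      intro A hA xs hxs
      have hcov : ∃ x ∈ s₀.toList, A x ≠ B x := by
        obtain ⟨x, hx, hne⟩ := hs₀ A (hVC hA)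
        exact ⟨x, Finset.mem_toList.mpr hx, hne⟩
      have hlt := hS2 A hA hcov xs hxs
      have hlen : s₀.toList.length = s₀.card := Finset.length_toList s₀
      rw [hlen] at hlt
      calc xs.length < s₀.card * c ^ k := hlt
        _ ≤ c * c ^ k := Nat.mul_le_mul_right _ hs₀card
        _ = c ^ (k + 1) := by rw [hpow]; ring

end Main

theorem stmt_3 {X : Type*} (C H : Set (X → Bool)) (hCH : C ⊆ H) (d c : ℕ)
    (hd : Ldim C = (d : ℕ∞)) (hc1 : 1 < c) (hc : CDim C H = (c : ℕ∞)) :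
    LCEQ C H ≤ ((c ^ d : ℕ) : ℕ∞) := by
  have hc2 : 2 ≤ c := hc1
  have hld : ¬ LdimGe C (d + 1) := by
    intro h
    have h1 : ((d + 1 : ℕ) : ℕ∞) ≤ Ldim C := le_sSup ⟨d + 1, rfl, h⟩
    rw [hd] at h1
    have := Nat.cast_le.mp h1
    omega
  have hS : CDimLe C H c := by
    by_contra hcc
    have hlb : ((c + 1 : ℕ) : ℕ∞) ≤ CDim C H := by
      apply le_sInf
      rintro n ⟨m, rfl, hm⟩
      by_cases hmc : c + 1 ≤ m
      · exact_mod_cast hmc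
      · have hmle : m ≤ c := by omega
        have : CDimLe C H c := fun A hA => hm A (fun s hs => hA s (hs.trans hmle))
        exact absurd this hcc
    rw [hc] at hlb
    have := Nat.cast_le.mp hlb
    omega
  have hC0 : ¬ CDimLe C H 0 := by
    intro h0
    have h1 : CDim C H ≤ ((0 : ℕ) : ℕ∞) := sInf_le ⟨0, rfl, h0⟩
    rw [hc] at h1
    have := Nat.cast_le.mp h1
    omega
  obtain ⟨A0, hA0, hA0H⟩ : ∃ A : X → Bool,
      NConsistent C (fun x => some (A x)) 0 ∧ A ∉ H := by
    by_contra h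
    push_neg at h
    exact hC0 (fun A hA => h A hA)
  obtain ⟨g, hg, -⟩ := hA0 ∅ (by simp)
  obtain ⟨s, hs1, hs2⟩ := main_lemma hCH hc2 hS g (hCH hg) d C subset_rfl hld
  exact sInf_le ⟨c ^ d, rfl, ⟨s, hs1, hs2⟩⟩
end

section
/- Let X be a set, C a concept class on X, and H a hypothesis class on X. Suppose there is some partially specified subset A of X which is n-consistent with C but which has no total extension in H. Then n < LC^EQ(C, H). -/
/-! The adversary answers every query `B ∈ H` with a point of `dom A` on which `B` disagrees
with `A`; such a point exists because no hypothesis extends `A`. After `n` rounds the `n`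
counterexamples lie in `dom A`, so `n`-consistency yields a target in `C` agreeing with `A` on
all of them, and the play is valid for that target. Hence no learner finishes within `n` queries. -/

def counterexamplePlay {X : Type*} (next : List X → X) : ℕ → List X
  | 0 => []
  | i + 1 => counterexamplePlay next i ++ [next (counterexamplePlay next i)]

section counterexamplePlay

variable {X : Type*} (next : List X → X)

@[simp]
lemma length_counterexamplePlay (i : ℕ) : (counterexamplePlay next i).length = i := by
  induction i with
  | zero => rfl
  | succ i ih => simp [counterexamplePlay, ih]

lemma counterexamplePlay_prefix {i m : ℕ} (h : i ≤ m) : counterexamplePlay next i <+: counterexamplePlay next m := by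
  induction m, h using Nat.le_induction with
  | base => exact List.prefix_refl _
  | succ m _ ih => exact ih.trans (List.prefix_append _ _)

lemma take_counterexamplePlay {i m : ℕ} (h : i ≤ m) : (counterexamplePlay next m).take i = counterexamplePlay next i := by
  simpa using (List.prefix_iff_eq_take.mp (counterexamplePlay_prefix next h)).symm

lemma getElem_counterexamplePlay {i m : ℕ} (h : i < (counterexamplePlay next m).length) :
    (counterexamplePlay next m)[i] = next (counterexamplePlay next i) := by
  have hpre := counterexamplePlay_prefix next (show i + 1 ≤ m by simpa using h)
  rw [← hpre.getElem (by simp)]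
  simp [counterexamplePlay]

lemma validEQPlay_counterexamplePlay {f : X → Bool} {s : List X → X → Bool} {k : ℕ}
    (h : ∀ i < k, s (counterexamplePlay next i) (next (counterexamplePlay next i)) ≠ f (next (counterexamplePlay next i))) :
    ValidEQPlay f s (counterexamplePlay next k) := by
  intro i hi
  have hik : i < k := by simpa using hi
  simpa [take_counterexamplePlay next hik.le, getElem_counterexamplePlay next hi] using h i hik

end counterexamplePlay

lemma exists_disagreement_of_not_pExtends {X : Type*} {B : X → Bool} {A : X → Option Bool}
    (h : ¬PExtends B A) : ∃ x b, A x = some b ∧ B x ≠ b := by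
  unfold PExtends at h
  push Not at h
  exact h

lemma lt_of_eqLearnIn_of_nConsistent {X : Type*} {C H : Set (X → Bool)} {A : X → Option Bool}
    {n m : ℕ} (hcons : NConsistent C A n) (hext : ¬∃ B ∈ H, PExtends B A)
    (hlearn : EQLearnIn C H m) : n < m := by
  classical
  obtain ⟨s, hsH, hs⟩ := hlearn
  have hdis : ∀ l, ∃ x b, A x = some b ∧ s l x ≠ b := fun l =>
    exists_disagreement_of_not_pExtends fun hB => hext ⟨s l, hsH l, hB⟩
  choose next b hAb hsb using hdis
  set L := counterexamplePlay next n
  obtain ⟨f, hfC, hf⟩ := hcons L.toFinset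
    ((List.toFinset_card_le L).trans (length_counterexamplePlay next n).le)
  have hvalid : ValidEQPlay f s L := validEQPlay_counterexamplePlay next fun i hi => by
    have hmem : next (counterexamplePlay next i) ∈ L.toFinset := by
      rw [List.mem_toFinset, ← getElem_counterexamplePlay next (by simpa using hi)]
      exact List.getElem_mem _
    rw [hf _ hmem _ (hAb _)]
    exact hsb _
  simpa [L] using hs f hfC L hvalid

lemma natCast_lt_lceq {X : Type*} {C H : Set (X → Bool)} {n : ℕ}
    (h : ∀ m, EQLearnIn C H m → n < m) : (n : ℕ∞) < LCEQ C H := by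
  refine lt_of_lt_of_le (b := ((n + 1 : ℕ) : ℕ∞)) (by exact_mod_cast n.lt_succ_self) (le_sInf ?_)
  rintro _ ⟨m, rfl, hm⟩
  exact_mod_cast h m hm

theorem stmt_4 {X : Type*} (C H : Set (X → Bool)) (A : X → Option Bool) (n : ℕ)
    (hcons : NConsistent C A n) (hext : ¬∃ B ∈ H, PExtends B A) :
    (n : ℕ∞) < LCEQ C H :=
  natCast_lt_lceq fun _ hm => lt_of_eqLearnIn_of_nConsistent hcons hext hm
end

section
/- Let C be a concept class on a set X and let A be a partially specified subset of X that is finitely consistent with C. Then there is a total extension A' ⊒ A (a total function A' : X → {0,1} agreeing with A on dom(A)) that is finitely consistent with C. -/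
theorem stmt_6 {X : Type*} (C : Set (X → Bool)) (A : X → Option Bool)
    (h : FinitelyConsistent C A) :
    ∃ A' : X → Bool, PExtends A' A ∧ FinitelyConsistent C (fun x => some (A' x)) := by
  classical
  choose f hfC hf using h
  haveI : Nonempty (Finset X) := ⟨∅⟩
  let U : Ultrafilter (Finset X) := Ultrafilter.of Filter.atTop
  have hU : (U : Filter (Finset X)) ≤ Filter.atTop := Ultrafilter.of_le _
  set A' : X → Bool := fun x => if {s : Finset X | f s x = true} ∈ U then true else false
    with hA'
  have key : ∀ x, {s : Finset X | f s x = A' x} ∈ U := by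
    intro x
    by_cases hx : {s : Finset X | f s x = true} ∈ U
    · have : A' x = true := if_pos hx
      rw [this]; exact hx
    · have hAx : A' x = false := if_neg hx
      rw [hAx]
      have := (Ultrafilter.compl_mem_iff_notMem (s := {s : Finset X | f s x = true})
        (f := U)).2 hx
      have heq : {s : Finset X | f s x = true}ᶜ = {s : Finset X | f s x = false} := by
        ext s; simp [Bool.not_eq_true]
      rwa [heq] at this
  refine ⟨A', ?_, ?_⟩
  · intro x b hxb
    have hmem : {s : Finset X | f s x = b} ∈ U := by
      apply hU
      refine Filter.mem_of_superset (Filter.mem_atTop ({x} : Finset X)) ?_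
      intro s hs
      exact hf s x (by simpa using hs) b hxb
    have : {s : Finset X | f s x = A' x} ∩ {s : Finset X | f s x = b} ∈ U :=
      Filter.inter_mem (key x) hmem
    obtain ⟨s, hs1, hs2⟩ := Ultrafilter.nonempty_of_mem this
    rw [← hs1, hs2]
  · intro s
    have : (⋂ x ∈ s, {t : Finset X | f t x = A' x}) ∈ U := by
      refine (Filter.biInter_mem s.finite_toSet).2 ?_
      intro x _; exact key x
    obtain ⟨t, ht⟩ := Ultrafilter.nonempty_of_mem this
    refine ⟨f t, hfC t, ?_⟩
    intro x hx b hb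
    have := Set.mem_iInter₂.1 ht x hx
    simp only [Set.mem_setOf_eq] at this
    rw [this]
    simpa using hb
end

section
/- Let C be a concept class on a set X and let n < ∞. The following are equivalent: (i) C has consistency threshold ≤ n, i.e., for every hypothesis class H ⊇ C, C(C, H) < ∞ if and only if C(C, H) ≤ n; (ii) every total function A : X → {0,1} that is n-consistent with C is finitely consistent with C; (iii) for every hypothesis class H containing every total function X → {0,1} that is finitely consistent with C, one has C(C, H) ≤ n. -/
lemma nCons_mono {X : Type*} {C : Set (X → Bool)} {A : X → Option Bool} {m m' : ℕ}
    (h : m ≤ m') (hA : NConsistent C A m') : NConsistent C A m :=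
  fun s hs => hA s (hs.trans h)

lemma cdimLe_mono {X : Type*} {C H : Set (X → Bool)} {m m' : ℕ}
    (h : m ≤ m') (hm : CDimLe C H m) : CDimLe C H m' :=
  fun A hA => hm A (nCons_mono h hA)

lemma cdim_le_iff {X : Type*} {C H : Set (X → Bool)} {n : ℕ} :
    CDim C H ≤ (n : ℕ∞) ↔ CDimLe C H n := by
  constructor
  · intro h
    by_contra hn
    have h1 : ((n + 1 : ℕ) : ℕ∞) ≤ CDim C H := by
      apply le_sInf
      rintro b ⟨m, rfl, hm⟩
      have : ¬ m ≤ n := fun hle => hn (cdimLe_mono hle hm)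
      exact_mod_cast Nat.succ_le_of_lt (lt_of_not_ge this)
    have := h1.trans h
    exact absurd (by exact_mod_cast this) (by omega)
  · intro h
    exact sInf_le ⟨n, rfl, h⟩

lemma cdim_lt_top_iff {X : Type*} {C H : Set (X → Bool)} :
    CDim C H < ⊤ ↔ ∃ m : ℕ, CDimLe C H m := by
  constructor
  · intro h
    rw [CDim, sInf_lt_iff] at h
    obtain ⟨b, ⟨m, rfl, hm⟩, -⟩ := h
    exact ⟨m, hm⟩
  · rintro ⟨m, hm⟩
    exact lt_of_le_of_lt (sInf_le ⟨m, rfl, hm⟩) (by exact_mod_cast WithTop.coe_lt_top m)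

theorem stmt_7 {X : Type*} (C : Set (X → Bool)) (n : ℕ) :
    ((∀ H : Set (X → Bool), C ⊆ H → (CDim C H < ⊤ ↔ CDim C H ≤ (n : ℕ∞))) ↔
      (∀ A : X → Bool, NConsistent C (fun x => some (A x)) n →
        FinitelyConsistent C (fun x => some (A x)))) ∧
    ((∀ A : X → Bool, NConsistent C (fun x => some (A x)) n →
        FinitelyConsistent C (fun x => some (A x))) ↔
      (∀ H : Set (X → Bool),
        (∀ B : X → Bool, FinitelyConsistent C (fun x => some (B x)) → B ∈ H) →
        CDim C H ≤ (n : ℕ∞))) := by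
  constructor
  · constructor
    · -- (i) → (ii)
      intro hi A hA s
      by_contra hs
      push_neg at hs
      set H : Set (X → Bool) := {B | ∃ x ∈ s, B x ≠ A x} with hH
      have hCH : C ⊆ H := by
        intro f hf
        obtain ⟨x, hx, b, hb, hne⟩ := hs f hf
        exact ⟨x, hx, fun h => hne (by rw [h]; exact Option.some_inj.mp hb)⟩
      have hfin : CDimLe C H s.card := by
        intro B hB
        obtain ⟨f, hf, hfB⟩ := hB s le_rfl
        by_contra hBH
        simp only [hH, Set.mem_setOf_eq] at hBH
        push_neg at hBH
        obtain ⟨x, hx, b, hb, hne⟩ := hs f hf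
        apply hne
        rw [hfB x hx (B x) rfl, hBH x hx]
        exact Option.some_inj.mp hb
      have hlt : CDim C H < ⊤ := cdim_lt_top_iff.mpr ⟨s.card, hfin⟩
      have hle : CDimLe C H n := cdim_le_iff.mp ((hi H hCH).mp hlt)
      obtain ⟨x, -, hx⟩ := hle A hA
      exact hx rfl
    · -- (ii) → (i)
      intro hii H hCH
      constructor
      · intro hlt
        obtain ⟨m, hm⟩ := cdim_lt_top_iff.mp hlt
        refine cdim_le_iff.mpr (fun A hA => hm A ?_)
        exact fun s _ => hii A hA s
      · intro h
        exact lt_of_le_of_lt h (by exact_mod_cast WithTop.coe_lt_top n)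
  · constructor
    · -- (ii) → (iii)
      intro hii H hH
      exact cdim_le_iff.mpr (fun A hA => hH A (hii A hA))
    · -- (iii) → (ii)
      intro hiii A hA
      exact cdim_le_iff.mp (hiii {B | FinitelyConsistent C (fun x => some (B x))}
        (fun B hB => hB)) A hA
end

section
/- Let C be a concept class on a set X with Ldim(C) = d < ∞. Then there exists a hypothesis class H with C ⊆ H ⊆ P(X) such that C(C, H) ≤ d + 1 < ∞ and Ldim(H) = Ldim(C). In particular, the class H consisting of all total functions X → {0,1} that are (d+1)-consistent with C works. -/
lemma ldimGe_mono {X : Type*} (C : Set (X → Bool)) {d e : ℕ} (h : LdimGe C d) (he : e ≤ d) :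
    LdimGe C e := by
  obtain ⟨t, ht⟩ := h
  refine ⟨t, fun σ hσ => ?_⟩
  have hlen : (σ ++ List.replicate (d - e) false).length = d := by
    simp [hσ]; omega
  obtain ⟨f, hf, hk⟩ := ht _ hlen
  refine ⟨f, hf, fun k hk' => ?_⟩
  have h1 : (σ ++ List.replicate (d - e) false).take k = σ.take k :=
    List.take_append_of_le_length (by omega)
  have h2 : (σ ++ List.replicate (d - e) false).getD k false = σ.getD k false := by
    simp [List.getD, List.getElem?_append_left (by omega : k < σ.length)]
  have := hk k (by omega)
  rw [h1, h2] at this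
  exact this

lemma ldimGe_of_consistent {X : Type*} (C : Set (X → Bool)) {n n' : ℕ}
    (h : LdimGe {B : X → Bool | NConsistent C (fun x => some (B x)) n} n') (hle : n' ≤ n) :
    LdimGe C n' := by
  classical
  obtain ⟨t, ht⟩ := h
  refine ⟨t, fun σ hσ => ?_⟩
  obtain ⟨B, hB, hBk⟩ := ht σ hσ
  obtain ⟨f, hf, hfB⟩ := hB ((Finset.range n').image (fun k => t (σ.take k)))
    (le_trans (le_trans Finset.card_image_le (by simp)) hle)
  refine ⟨f, hf, fun k hk => ?_⟩
  have := hfB (t (σ.take k)) (Finset.mem_image.2 ⟨k, Finset.mem_range.2 hk, rfl⟩) _ rfl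
  rw [this]
  exact hBk k hk

theorem stmt_8 {X : Type*} (C : Set (X → Bool)) (d : ℕ) (hd : Ldim C = (d : ℕ∞)) :
    C ⊆ {B : X → Bool | NConsistent C (fun x => some (B x)) (d + 1)} ∧
    CDim C {B : X → Bool | NConsistent C (fun x => some (B x)) (d + 1)} ≤ (d : ℕ∞) + 1 ∧
    Ldim {B : X → Bool | NConsistent C (fun x => some (B x)) (d + 1)} = Ldim C := by
  set H := {B : X → Bool | NConsistent C (fun x => some (B x)) (d + 1)} with hH
  have hsub : C ⊆ H := by
    intro f hf s hs
    exact ⟨f, hf, fun x _ b hb => Option.some_inj.mp hb⟩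
  refine ⟨hsub, ?_, ?_⟩
  · have : ((d + 1 : ℕ) : ℕ∞) ∈ {n : ℕ∞ | ∃ m : ℕ, n = m ∧ CDimLe C H m} :=
      ⟨d + 1, rfl, fun A hA => hA⟩
    have := sInf_le this
    rwa [Nat.cast_add, Nat.cast_one] at this
  · have hle : Ldim H ≤ (d : ℕ∞) := by
      apply sSup_le
      rintro n ⟨d', rfl, hge⟩
      by_contra hcon
      push_neg at hcon
      have hd' : d + 1 ≤ d' := by exact_mod_cast hcon
      have h1 : LdimGe H (d + 1) := ldimGe_mono H hge hd'
      have h2 : LdimGe C (d + 1) := ldimGe_of_consistent C h1 le_rfl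
      have : ((d + 1 : ℕ) : ℕ∞) ≤ Ldim C := le_sSup ⟨d + 1, rfl, h2⟩
      rw [hd] at this
      exact absurd (by exact_mod_cast this) (by omega)
    have hge : Ldim C ≤ Ldim H := by
      apply sSup_le
      rintro n ⟨d', rfl, hge'⟩
      refine le_sSup ⟨d', rfl, ?_⟩
      obtain ⟨t, ht⟩ := hge'
      exact ⟨t, fun σ hσ => by
        obtain ⟨f, hf, hk⟩ := ht σ hσ
        exact ⟨f, hsub hf, hk⟩⟩
    rw [hd]
    exact le_antisymm hle (hd ▸ hge)
end

section
/- Let X be a set, C a concept class on X, and H a hypothesis class on X. If C(C, H) = 1 then SC(C, H) = 1, and if C(C, H) = 2 then SC(C, H) = 2. -/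
section Aux

variable {X : Type*}

private lemma nconsistent_mono {C : Set (X → Bool)} {A : X → Option Bool} {a b : ℕ}
    (hab : a ≤ b) (h : NConsistent C A b) : NConsistent C A a :=
  fun s hs => h s (hs.trans hab)

private lemma cdimle_mono {C H : Set (X → Bool)} {a b : ℕ} (hab : a ≤ b)
    (h : CDimLe C H a) : CDimLe C H b :=
  fun A hA => h A (nconsistent_mono hab hA)

private lemma scdimle_to_cdimle {C H : Set (X → Bool)} {n : ℕ}
    (h : SCDimLe C H n) : CDimLe C H n := by
  intro A hA
  obtain ⟨B, hBH, hBA⟩ := h (fun x => some (A x)) hA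
  have : A = B := funext fun x => (hBA x (A x) rfl).symm
  rwa [this]

private lemma scdimle_mono {C H : Set (X → Bool)} {a b : ℕ} (hab : a ≤ b)
    (h : SCDimLe C H a) : SCDimLe C H b :=
  fun A hA => h A (nconsistent_mono hab hA)

/-- Characterization of the `sInf` used in the dimension definitions. -/
private lemma dim_eq_iff {P : ℕ → Prop} {k : ℕ} :
    sInf {n : ℕ∞ | ∃ m : ℕ, n = (m : ℕ∞) ∧ P m} = (k : ℕ∞) ↔ P k ∧ ∀ m < k, ¬ P m := by
  constructor
  · intro h
    set T : Set ℕ∞ := {n : ℕ∞ | ∃ m : ℕ, n = (m : ℕ∞) ∧ P m} with hT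
    have hne : T.Nonempty := by
      by_contra hempty
      rw [Set.not_nonempty_iff_eq_empty] at hempty
      rw [hempty, sInf_empty] at h
      exact (ENat.coe_ne_top k) h.symm
    have hmem : sInf T ∈ T := csInf_mem hne
    rw [h] at hmem
    obtain ⟨m, hm, hPm⟩ := hmem
    have hkm : k = m := by exact_mod_cast hm
    refine ⟨hkm ▸ hPm, fun m' hm' hPm' => ?_⟩
    have : sInf T ≤ (m' : ℕ∞) := sInf_le ⟨m', rfl, hPm'⟩
    rw [h] at this
    exact absurd (by exact_mod_cast this) (not_le.mpr hm')
  · rintro ⟨h1, h2⟩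
    refine le_antisymm (sInf_le ⟨k, rfl, h1⟩) (le_sInf ?_)
    rintro x ⟨m, rfl, hPm⟩
    have : k ≤ m := by
      by_contra hlt
      exact h2 m (not_le.mp hlt) hPm
    exact_mod_cast this

/-- Key lemma: if `2 * (n - 1) ≤ n` (i.e. `n ≤ 2`) and `1 ≤ n`, then
`CDimLe C H n` implies `SCDimLe C H n`, via a Zorn's lemma argument. -/
private lemma key_lemma (C H : Set (X → Bool)) {n : ℕ} (hn : 1 ≤ n)
    (h2n : 2 * (n - 1) ≤ n) (hC : CDimLe C H n) : SCDimLe C H n := by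
  classical
  intro A hA
  set S : Set (Set (X × Bool)) :=
    {G | {p : X × Bool | A p.1 = some p.2} ⊆ G ∧
      ∀ s : Finset (X × Bool), ↑s ⊆ G → (s.image Prod.fst).card ≤ n →
        ∃ f ∈ C, ∀ p ∈ s, f p.1 = p.2} with hS
  have hA0 : {p : X × Bool | A p.1 = some p.2} ∈ S := by
    refine ⟨subset_rfl, fun s hs hcard => ?_⟩
    obtain ⟨f, hf, hfs⟩ := hA (s.image Prod.fst) hcard
    exact ⟨f, hf, fun p hp => hfs p.1 (Finset.mem_image_of_mem _ hp) p.2 (hs hp)⟩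
  have hzorn : ∀ c ⊆ S, IsChain (· ⊆ ·) c → c.Nonempty →
      ∃ ub ∈ S, ∀ s ∈ c, s ⊆ ub := by
    intro c hcS hchain hcne
    refine ⟨⋃₀ c, ⟨?_, ?_⟩, fun s hs => Set.subset_sUnion_of_mem hs⟩
    · obtain ⟨t, ht⟩ := hcne
      exact ((hcS ht).1).trans (Set.subset_sUnion_of_mem ht)
    · intro s hs hcard
      rw [Set.sUnion_eq_biUnion] at hs
      obtain ⟨t, htc, hst⟩ :=
        DirectedOn.exists_mem_subset_of_finset_subset_biUnion hcne hchain.directedOn hs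
      exact (hcS htc).2 s hst hcard
  obtain ⟨G, -, hGmax⟩ := zorn_subset_nonempty S hzorn _ hA0
  have hGS : G ∈ S := hGmax.1
  -- G is total
  have htotal : ∀ y : X, ∃ b, (y, b) ∈ G := by
    intro y
    by_contra hy
    push_neg at hy
    have hnb : ∀ b : Bool, ∃ t : Finset (X × Bool), ↑t ⊆ G ∧
        (t.image Prod.fst).card ≤ n - 1 ∧
        ∀ f ∈ C, f y = b → ∃ p ∈ t, f p.1 ≠ p.2 := by
      intro b
      have hins : insert (y, b) G ∉ S := by
        intro hmem
        exact hy b (hGmax.2 hmem (Set.subset_insert _ _) (Set.mem_insert _ _))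
      rw [hS, Set.mem_setOf_eq] at hins
      push_neg at hins
      have h1 : {p : X × Bool | A p.1 = some p.2} ⊆ insert (y, b) G :=
        (hGS.1).trans (Set.subset_insert _ _)
      obtain ⟨s, hs, hcard, hbad⟩ := hins h1
      by_cases hyb : (y, b) ∈ s
      · refine ⟨s.erase (y, b), ?_, ?_, ?_⟩
        · intro p hp
          have hp' := Finset.mem_erase.mp hp
          rcases hs hp'.2 with h | h
          · exact absurd h hp'.1
          · exact h
        · have hsub : (s.erase (y, b)).image Prod.fst ⊆ (s.image Prod.fst).erase y := by
            intro x hx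
            obtain ⟨p, hp, rfl⟩ := Finset.mem_image.mp hx
            have hp' := Finset.mem_erase.mp hp
            refine Finset.mem_erase.mpr ⟨?_, Finset.mem_image_of_mem _ hp'.2⟩
            intro hpy
            rcases hs hp'.2 with h | h
            · exact hp'.1 h
            · exact hy p.2 (show (y, p.2) ∈ G by rw [← hpy]; exact h)
          calc ((s.erase (y, b)).image Prod.fst).card
              ≤ ((s.image Prod.fst).erase y).card := Finset.card_le_card hsub
            _ = (s.image Prod.fst).card - 1 :=
                Finset.card_erase_of_mem (Finset.mem_image_of_mem _ hyb)
            _ ≤ n - 1 := Nat.sub_le_sub_right hcard 1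
        · intro f hf hfy
          obtain ⟨p, hp, hne⟩ := hbad f hf
          refine ⟨p, Finset.mem_erase.mpr ⟨?_, hp⟩, hne⟩
          rintro rfl
          exact hne hfy
      · -- (y, b) ∉ s : then s ⊆ G, contradiction with G ∈ S
        exfalso
        have hsG : ↑s ⊆ G := by
          intro p hp
          rcases hs hp with h | h
          · exact absurd (h ▸ hp) hyb
          · exact h
        obtain ⟨f, hf, hfs⟩ := hGS.2 s hsG hcard
        obtain ⟨p, hp, hne⟩ := hbad f hf
        exact hne (hfs p hp)
    obtain ⟨s₀, hs₀G, hc₀, hbad₀⟩ := hnb false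
    obtain ⟨s₁, hs₁G, hc₁, hbad₁⟩ := hnb true
    have hu : ↑(s₀ ∪ s₁) ⊆ G := by
      rw [Finset.coe_union]
      exact Set.union_subset hs₀G hs₁G
    have hcard : ((s₀ ∪ s₁).image Prod.fst).card ≤ n := by
      rw [Finset.image_union]
      calc (s₀.image Prod.fst ∪ s₁.image Prod.fst).card
          ≤ (s₀.image Prod.fst).card + (s₁.image Prod.fst).card := Finset.card_union_le _ _
        _ ≤ (n - 1) + (n - 1) := Nat.add_le_add hc₀ hc₁
        _ = 2 * (n - 1) := (two_mul _).symm
        _ ≤ n := h2n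
    obtain ⟨f, hfC, hf⟩ := hGS.2 (s₀ ∪ s₁) hu hcard
    cases hfy : f y with
    | false =>
      obtain ⟨p, hp, hne⟩ := hbad₀ f hfC hfy
      exact hne (hf p (Finset.mem_union_left _ hp))
    | true =>
      obtain ⟨p, hp, hne⟩ := hbad₁ f hfC hfy
      exact hne (hf p (Finset.mem_union_right _ hp))
  choose b hb using htotal
  -- function b is n-consistent
  have hBcons : NConsistent C (fun x => some (b x)) n := by
    intro s hcard
    have hsub : ↑(s.image (fun x => (x, b x))) ⊆ G := by
      intro p hp
      obtain ⟨x, _, rfl⟩ := Finset.mem_image.mp (Finset.mem_coe.mp hp)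
      exact hb x
    have hcard' : (((s.image (fun x => (x, b x)))).image Prod.fst).card ≤ n := by
      rw [Finset.image_image]
      have : (Prod.fst ∘ fun x => (x, b x)) = id := rfl
      rw [this, Finset.image_id]
      exact hcard
    obtain ⟨f, hfC, hf⟩ := hGS.2 _ hsub hcard'
    refine ⟨f, hfC, fun x hx b' hb' => ?_⟩
    have hfx : f x = b x := hf (x, b x) (Finset.mem_image_of_mem _ hx)
    have : b x = b' := by injection hb'
    rw [hfx, this]
  refine ⟨b, hC b hBcons, ?_⟩
  -- b extends A, via functionality of G
  intro x c hx
  have h1 : (x, c) ∈ G := hGS.1 hx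
  have h2 : (x, b x) ∈ G := hb x
  have hsub : ↑({(x, c), (x, b x)} : Finset (X × Bool)) ⊆ G := by
    intro p hp
    rcases Finset.mem_insert.mp (Finset.mem_coe.mp hp) with rfl | hp'
    · exact h1
    · rw [Finset.mem_singleton.mp hp']
      exact h2
  have hcard : ((({(x, c), (x, b x)} : Finset (X × Bool))).image Prod.fst).card ≤ n := by
    have : (({(x, c), (x, b x)} : Finset (X × Bool))).image Prod.fst ⊆ {x} := by
      intro z hz
      obtain ⟨p, hp, hpz⟩ := Finset.mem_image.mp hz
      rcases Finset.mem_insert.mp hp with rfl | hp'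
      · simpa using hpz.symm
      · rw [Finset.mem_singleton.mp hp'] at hpz
        simpa using hpz.symm
    calc ((({(x, c), (x, b x)} : Finset (X × Bool))).image Prod.fst).card
        ≤ ({x} : Finset X).card := Finset.card_le_card this
      _ = 1 := Finset.card_singleton x
      _ ≤ n := hn
  obtain ⟨f, -, hf⟩ := hGS.2 _ hsub hcard
  have e1 : f x = c := hf (x, c) (Finset.mem_insert_self _ _)
  have e2 : f x = b x := hf (x, b x) (Finset.mem_insert_of_mem (Finset.mem_singleton_self _))
  rw [← e2, e1]

end Aux

theorem stmt_9 {X : Type*} (C H : Set (X → Bool)) :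
    (CDim C H = 1 → SCDim C H = 1) ∧ (CDim C H = 2 → SCDim C H = 2) := by
  have main : ∀ n : ℕ, 1 ≤ n → 2 * (n - 1) ≤ n →
      CDim C H = (n : ℕ∞) → SCDim C H = (n : ℕ∞) := by
    intro n hn h2n h
    rw [CDim, dim_eq_iff] at h
    rw [SCDim, dim_eq_iff]
    refine ⟨key_lemma C H hn h2n h.1, fun m hm hSm => ?_⟩
    exact h.2 m hm (scdimle_to_cdimle hSm)
  constructor
  · intro h
    have := main 1 le_rfl (by norm_num) (by exact_mod_cast h)
    exact_mod_cast this
  · intro h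
    have := main 2 (by norm_num) (by norm_num) (by exact_mod_cast h)
    exact_mod_cast this
end

section
/- Let X be a set, C a concept class on X, and H a hypothesis class with C ⊆ H ⊆ P(X). Suppose Ldim(C) < ∞. Then C(C, H) < ∞ if and only if SC(C, H) < ∞. -/
/-!
The direction `SC < ∞ → C < ∞` is immediate, a total function being a partial one.
Conversely, let `C(C, H) ≤ c`, `Ldim C ≤ d`, and let `A` be a partial function without an extension
in `H`. Let the standard optimal algorithm learn a target consistent with `A`. Each hypothesis it
proposes can be refuted while enlarging `A` at one point only: a hypothesis in `H` already
disagrees with `A`, and one outside `H` is refuted by `C` on at most `c` points, one of which can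
be labelled against it at the cost of dividing the consistency level of `A` by about `c + 1`.
Every refutation lowers the Littlestone dimension of the version space, so after `d + 1` rounds
it is empty, which is impossible if `A` was `N`-consistent with `C` for a large enough `N`.
-/

open Function

namespace ConsistencyDimension

variable {X : Type*} {C H : Set (X → Bool)}

def versionSpace (C : Set (X → Bool)) (A : X → Option Bool) (p : Finset X) : Set (X → Bool) :=
  {f | f ∈ C ∧ ∀ y ∈ p, ∀ b, A y = some b → f y = b}

lemma versionSpace_subset (A : X → Option Bool) (p : Finset X) : versionSpace C A p ⊆ C :=
  fun _ hf => hf.1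

lemma NConsistent.mono {A : X → Option Bool} {n n' : ℕ} (hA : NConsistent C A n) (h : n' ≤ n) :
    NConsistent C A n' :=
  fun s hs => hA s (hs.trans h)

lemma CDimLe.subset {n : ℕ} (hc : CDimLe C H n) : C ⊆ H :=
  fun f hf => hc f fun _ _ => ⟨f, hf, by simp⟩

lemma SCDimLe.cDimLe {n : ℕ} (hs : SCDimLe C H n) : CDimLe C H n := by
  intro A hA
  obtain ⟨B, hB, hBA⟩ := hs _ hA
  rwa [show A = B from funext fun x => (hBA x (A x) rfl).symm]

lemma sInf_natCast_lt_top_iff {P : ℕ → Prop} :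
    sInf {n : ℕ∞ | ∃ m : ℕ, n = m ∧ P m} < ⊤ ↔ ∃ m, P m := by
  simp only [sInf_lt_iff, Set.mem_ofPred_eq]
  constructor
  · rintro ⟨_, ⟨m, rfl, hm⟩, -⟩
    exact ⟨m, hm⟩
  · rintro ⟨m, hm⟩
    exact ⟨m, ⟨m, rfl, hm⟩, ENat.natCast_lt_top m⟩

lemma LdimGe.mono {V W : Set (X → Bool)} (h : V ⊆ W) {d : ℕ} (hV : LdimGe V d) : LdimGe W d := by
  obtain ⟨t, ht⟩ := hV
  refine ⟨t, fun σ hσ => ?_⟩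
  obtain ⟨f, hf, hft⟩ := ht σ hσ
  exact ⟨f, h hf, hft⟩

lemma ldimGe_zero [Nonempty X] {V : Set (X → Bool)} (h : V.Nonempty) : LdimGe V 0 := by
  obtain ⟨f, hf⟩ := h
  exact ⟨fun _ => Classical.arbitrary X, fun _ _ => ⟨f, hf, fun k hk => absurd hk k.not_lt_zero⟩⟩

lemma exists_not_ldimGe_of_ldim_lt_top (h : Ldim C < ⊤) : ∃ d, ¬ LdimGe C d := by
  obtain ⟨d, hd⟩ := WithTop.ne_top_iff_exists.mp h.ne
  refine ⟨d + 1, fun hge => ?_⟩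
  have hle : ((d + 1 : ℕ) : ℕ∞) ≤ Ldim C := le_sSup ⟨d + 1, rfl, hge⟩
  rw [← hd] at hle
  exact absurd (Nat.cast_le.mp hle) (Nat.not_succ_le_self d)

lemma ldimGe_succ {V : Set (X → Bool)} {x : X} {r : ℕ}
    (h0 : LdimGe {f | f ∈ V ∧ f x = false} r) (h1 : LdimGe {f | f ∈ V ∧ f x = true} r) :
    LdimGe V (r + 1) := by
  obtain ⟨t0, ht0⟩ := h0
  obtain ⟨t1, ht1⟩ := h1
  refine ⟨fun σ => match σ with
    | [] => x
    | false :: τ => t0 τ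
    | true :: τ => t1 τ, ?_⟩
  rintro (_ | ⟨b, τ⟩) hσ
  · simp at hσ
  have hτ : τ.length = r := by simpa using hσ
  obtain ⟨f, ⟨hfV, hfx⟩, hf⟩ : ∃ f ∈ {f | f ∈ V ∧ f x = b}, ∀ k < r,
      f ((match b :: τ.take k with
        | [] => x | false :: τ => t0 τ | true :: τ => t1 τ)) = τ.getD k false := by
    cases b
    · exact ht0 τ hτ
    · exact ht1 τ hτ
  refine ⟨f, hfV, ?_⟩
  rintro (_ | k) hk
  · simpa using hfx
  · simpa using hf k (by omega)

/-- The standard optimal algorithm: predicting, at each point, the label whose half of `V` has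
the larger Littlestone dimension leaves only halves of dimension `< r` on a mistake. -/
lemma exists_soa {V : Set (X → Bool)} {r : ℕ} (hV : ¬ LdimGe V (r + 1)) :
    ∃ h : X → Bool, ∀ x, ¬ LdimGe {f | f ∈ V ∧ f x = !h x} r := by
  classical
  refine ⟨fun x => decide (LdimGe {f | f ∈ V ∧ f x = true} r), fun x hbad => ?_⟩
  by_cases hx : LdimGe {f | f ∈ V ∧ f x = true} r
  · simp only [decide_eq_true hx, Bool.not_true] at hbad
    exact hV (ldimGe_succ hbad hx)
  · simp only [decide_eq_false hx, Bool.not_false] at hbad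
    exact hx hbad

section Update

variable [DecidableEq X]

/-- Otherwise the `|s|` witnesses of inconsistency, together with `s`, form a sample of size
`≤ |s| (M + 1)` on which no concept of `C` agrees with `A`. -/
lemma exists_update_nConsistent {A : X → Option Bool} {h : X → Bool} {s : Finset X} {M : ℕ}
    (hs : ∀ f ∈ C, ∃ x ∈ s, f x ≠ h x) (hA : NConsistent C A (s.card * (M + 1))) :
    ∃ x, A x ≠ some (h x) ∧ NConsistent C (update A x (some !h x)) M := by
  by_contra! hbad
  simp only [NConsistent, not_forall, not_exists, not_and, exists_prop] at hbad
  choose! t htM ht using hbad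
  let s' := s.filter fun x => A x ≠ some (h x)
  have hcard : (s ∪ s'.biUnion t).card ≤ s.card * (M + 1) := by
    have hbU : (s'.biUnion t).card ≤ s'.card * M :=
      Finset.card_biUnion_le_card_mul _ _ _ fun x hx => htM x (Finset.mem_filter.1 hx).2
    have hs' : s'.card ≤ s.card := Finset.card_filter_le _ _
    have := Finset.card_union_le s (s'.biUnion t)
    nlinarith
  obtain ⟨f, hfC, hf⟩ := hA _ hcard
  obtain ⟨x, hxs, hfx⟩ := hs f hfC
  have hAx : A x ≠ some (h x) := fun hAx => hfx (hf x (Finset.mem_union_left _ hxs) _ hAx)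
  obtain ⟨y, hyt, b, hyb, hfy⟩ := ht x hAx f hfC
  apply hfy
  by_cases hyx : y = x
  · subst hyx
    rw [update_self, Option.some_inj] at hyb
    exact hyb ▸ Bool.eq_not_iff.mpr hfx
  · rw [update_of_ne hyx] at hyb
    exact hf y (Finset.mem_union_right _
      (Finset.mem_biUnion.2 ⟨x, Finset.mem_filter.2 ⟨hxs, hAx⟩, hyt⟩)) b hyb

/-- The teacher's answer to the hypothesis `h`: if `h ∈ H` a counterexample is already in the
domain of `A`, and if `h ∉ H` then `h` is not `c`-consistent with `C`. -/
lemma exists_refuting_update {c M : ℕ} (hc : CDimLe C H c) {A : X → Option Bool}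
    (hno : ∀ B ∈ H, ¬ PExtends B A) (hA : NConsistent C A (c * (M + 1) + M)) (h : X → Bool) :
    ∃ x, A x ≠ some (h x) ∧ NConsistent C (update A x (some !h x)) M := by
  by_cases hh : h ∈ H
  · obtain ⟨x, b, hAx, hhx⟩ : ∃ x b, A x = some b ∧ h x ≠ b := by
      have := hno h hh
      unfold PExtends at this
      push Not at this
      exact this
    have hb : b = !h x := Bool.eq_not_iff.mpr (Ne.symm hhx)
    refine ⟨x, fun h' => hhx (Option.some_inj.mp (hAx ▸ h')).symm, ?_⟩
    rw [← hb, ← hAx, update_eq_self]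
    exact NConsistent.mono hA (Nat.le_add_left _ _)
  · obtain ⟨s, hsc, hs⟩ : ∃ s : Finset X, s.card ≤ c ∧ ∀ f ∈ C, ∃ x ∈ s, f x ≠ h x := by
      simpa [NConsistent] using mt (hc h) hh
    exact exists_update_nConsistent hs (NConsistent.mono hA (by nlinarith))

lemma extends_update {A : X → Option Bool} {x : X} {v : Bool} (hAx : A x ≠ some (!v)) :
    ∀ y b, A y = some b → update A x (some v) y = some b := by
  intro y b hy
  by_cases hyx : y = x
  · subst hyx
    cases b <;> cases v <;> simp_all
  · rwa [update_of_ne hyx]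

end Update

/-- Playing `exists_refuting_update` against the standard optimal algorithm, each round adds
one point to the sample and lowers the Littlestone dimension of the version space by one. -/
lemma exists_ldimGe_versionSpace {c : ℕ} (hc : CDimLe C H c) (r : ℕ) :
    ∀ m, ∃ N, ∀ (A : X → Option Bool) (p : Finset X), (∀ B ∈ H, ¬ PExtends B A) →
      p.card ≤ m → NConsistent C A N → LdimGe (versionSpace C A p) r := by
  classical
  induction r with
  | zero =>
    refine fun m => ⟨m, fun A p hno hp hA => ?_⟩
    obtain ⟨f, hfC, hf⟩ := hA p hp
    have : Nonempty X := by
      by_contra hX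
      exact hno f (CDimLe.subset hc hfC) fun x => (not_nonempty_iff.mp hX).elim x
    exact ldimGe_zero ⟨f, hfC, hf⟩
  | succ r ih =>
    intro m
    obtain ⟨N, hN⟩ := ih (m + 1)
    refine ⟨c * (N + 1) + N, fun A p hno hp hA => ?_⟩
    by_contra hV
    obtain ⟨h, hh⟩ := exists_soa hV
    obtain ⟨x, hAx, hA'⟩ := exists_refuting_update hc hno hA h
    set A' := update A x (some !h x)
    have hext : ∀ y b, A y = some b → A' y = some b := extends_update (by rwa [Bool.not_not])
    have hno' : ∀ B ∈ H, ¬ PExtends B A' :=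
      fun B hB hBA => hno B hB fun y b hy => hBA y b (hext y b hy)
    have hsub : versionSpace C A' (insert x p) ⊆ {f | f ∈ versionSpace C A p ∧ f x = !h x} := by
      rintro f ⟨hfC, hfp⟩
      exact ⟨⟨hfC, fun y hy b hb => hfp y (Finset.mem_insert_of_mem hy) b (hext y b hb)⟩,
        hfp x (Finset.mem_insert_self x p) _ (update_self ..)⟩
    have hp' : (insert x p).card ≤ m + 1 := (Finset.card_insert_le x p).trans (by omega)
    exact hh x (LdimGe.mono hsub (hN A' _ hno' hp' hA'))

end ConsistencyDimension

open ConsistencyDimension in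
theorem stmt_11_general {X : Type*} (C H : Set (X → Bool)) (h : Ldim C < ⊤) :
    CDim C H < ⊤ ↔ SCDim C H < ⊤ := by
  rw [CDim, SCDim, sInf_natCast_lt_top_iff, sInf_natCast_lt_top_iff]
  refine ⟨fun ⟨c, hc⟩ => ?_, fun ⟨m, hm⟩ => ⟨m, SCDimLe.cDimLe hm⟩⟩
  obtain ⟨d, hd⟩ := exists_not_ldimGe_of_ldim_lt_top h
  obtain ⟨N, hN⟩ := exists_ldimGe_versionSpace hc d 0
  refine ⟨N, fun A hA => ?_⟩
  by_contra! hno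
  exact hd ((hN A ∅ hno le_rfl hA).mono (versionSpace_subset A ∅))

theorem stmt_11 {X : Type*} (C H : Set (X → Bool)) (hCH : C ⊆ H) (h : Ldim C < ⊤) :
    CDim C H < ⊤ ↔ SCDim C H < ⊤ :=
  stmt_11_general C H h
end

section
/- Let X be a set, C a concept class on X, and H a hypothesis class on X. Suppose there is some total function A : X → {0,1} which is n-consistent with C but which does not belong to H. Then n < LC^{EQ+MQ}(C, H). In particular, C(C, H) ≤ LC^{EQ+MQ}(C, H). -/
/-
Answer every query according to a concept `A ∉ H`: a membership query is answered truthfully,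
and an equivalence query `B ∈ H` has a counterexample because `B ≠ A`. This adversary can keep
the game going for any number `m` of rounds. If `m ≤ n`, the at most `n` points it revealed are,
by `n`-consistency, also labelled in this way by some `f ∈ C`, so the same play is a legal run
against the target `f`, and a learner that needs fewer than `m` queries cannot exist.
-/

section

variable {X : Type*}

def ValidEMAnswer (A : X → Bool) (q : X ⊕ (X → Bool)) (e : X × Bool) : Prop :=
  e.2 = A e.1 ∧ (∀ x, q = Sum.inl x → e.1 = x) ∧ (∀ B, q = Sum.inr B → B e.1 ≠ A e.1)

theorem exists_validEMAnswer {A : X → Bool} {H : Set (X → Bool)} (hA : A ∉ H)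
    (q : X ⊕ (X → Bool)) (hq : ∀ B, q = Sum.inr B → B ∈ H) : ∃ e, ValidEMAnswer A q e := by
  cases q with
  | inl x => exact ⟨(x, A x), rfl, fun y hy => Sum.inl.inj hy, fun B hB => (Sum.inl_ne_inr hB).elim⟩
  | inr B =>
    obtain ⟨x, hx⟩ : ∃ x, B x ≠ A x := by
      by_contra! hBA
      exact hA (funext hBA ▸ hq B rfl)
    refine ⟨(x, A x), rfl, fun y hy => (Sum.inr_ne_inl hy).elim, fun B' hB' => ?_⟩
    cases hB'
    exact hx

theorem validEMPlay_concat {A : X → Bool} {s : List (X × Bool) → X ⊕ (X → Bool)}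
    {xs : List (X × Bool)} {e : X × Bool} (hxs : ValidEMPlay A s xs)
    (he : ValidEMAnswer A (s xs) e) : ValidEMPlay A s (xs ++ [e]) := by
  intro i hi
  rw [List.length_append, List.length_singleton] at hi
  rcases Nat.lt_succ_iff_lt_or_eq.mp hi with hi | rfl
  · have htake : (xs ++ [e]).take i = xs.take i := List.take_append_of_le_length hi.le
    have hget : (xs ++ [e]).get ⟨i, by rw [List.length_append]; omega⟩ = xs.get ⟨i, hi⟩ :=
      List.getElem_append_left hi
    rw [htake, hget]
    exact hxs i hi
  · simpa [ValidEMAnswer] using he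

theorem exists_validEMPlay_length {A : X → Bool} {H : Set (X → Bool)} (hA : A ∉ H)
    {s : List (X × Bool) → X ⊕ (X → Bool)} (hs : ∀ l B, s l = Sum.inr B → B ∈ H) (m : ℕ) :
    ∃ xs, ValidEMPlay A s xs ∧ xs.length = m := by
  induction m with
  | zero => exact ⟨[], fun i h => absurd h (Nat.not_lt_zero i), rfl⟩
  | succ m ih =>
    obtain ⟨xs, hxs, rfl⟩ := ih
    obtain ⟨e, he⟩ := exists_validEMAnswer hA (s xs) (hs xs)
    exact ⟨xs ++ [e], validEMPlay_concat hxs he, by simp⟩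

theorem validEMPlay_of_eqOn {A f : X → Bool} {s : List (X × Bool) → X ⊕ (X → Bool)}
    {xs : List (X × Bool)} (hxs : ValidEMPlay A s xs) (hfA : ∀ e ∈ xs, f e.1 = A e.1) :
    ValidEMPlay f s xs := by
  intro i hi
  rw [hfA _ (List.get_mem xs ⟨i, hi⟩)]
  exact hxs i hi

theorem lt_of_emLearnIn {C H : Set (X → Bool)} {A : X → Bool} {n m : ℕ}
    (hAC : NConsistent C (fun x => some (A x)) n) (hAH : A ∉ H) (hm : EMLearnIn C H m) :
    n < m := by
  classical
  by_contra! hmn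
  obtain ⟨s, hs, hlearn⟩ := hm
  obtain ⟨xs, hxs, hlen⟩ := exists_validEMPlay_length hAH hs m
  have hcard : (xs.map Prod.fst).toFinset.card ≤ n :=
    (List.toFinset_card_le _).trans (by simpa [hlen] using hmn)
  obtain ⟨f, hfC, hfA⟩ := hAC _ hcard
  have hfxs : ValidEMPlay f s xs :=
    validEMPlay_of_eqOn hxs fun e he =>
      hfA e.1 (List.mem_toFinset.mpr (List.mem_map_of_mem he)) (A e.1) rfl
  exact (hlearn f hfC xs hfxs).ne hlen

end

theorem stmt_15 {X : Type*} (C H : Set (X → Bool)) :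
    (∀ (A : X → Bool) (n : ℕ),
        NConsistent C (fun x => some (A x)) n → A ∉ H → (n : ℕ∞) < LCEM C H) ∧
    CDim C H ≤ LCEM C H := by
  refine ⟨fun A n hAC hAH => ?_, sInf_le_sInf ?_⟩
  · refine (ENat.natCast_lt_natCast.mpr n.lt_succ_self).trans_le (le_sInf ?_)
    rintro _ ⟨m, rfl, hm⟩
    exact_mod_cast lt_of_emLearnIn hAC hAH hm
  · rintro _ ⟨m, rfl, hm⟩
    refine ⟨m, rfl, fun A hAC => ?_⟩
    by_contra hAH
    exact (lt_of_emLearnIn hAC hAH hm).false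
end

section
/- Let X be a finite set, C a concept class on X, μ a probability measure on X with μ(x) > 0 for all x ∈ X. For distinct concepts A, B ∈ C, let Δ(A,B) = {x ∈ X : A(x) ≠ B(x)} and let d(A,B) = Σ_{a ∈ Δ(A,B)} (μ(a)/μ(Δ(A,B))) · (Ldim(C) − Ldim(C_{a = B(a)})). Then for any two distinct A, B ∈ C, d(A,B) + d(B,A) ≥ 1. -/
/-- The weight `d(A,B)` of the directed edge from `A` to `B` in the thicket query
graph: the expected value of `Ldim C − Ldim C_{x = B(x)}` for `x` drawn from `μ`
conditioned on the symmetric difference `Δ(A,B)`. -/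
noncomputable def edgeWeight {X : Type*} [Fintype X] (C : Set (X → Bool))
    (μ : X → ℝ) (A B : X → Bool) : ℝ :=
  ∑ a ∈ Finset.univ.filter (fun x => A x ≠ B x),
    (μ a / ∑ b ∈ Finset.univ.filter (fun x => A x ≠ B x), μ b) *
      (((Ldim C).toNat : ℝ) - ((Ldim {f ∈ C | f a = B a}).toNat : ℝ))

/-!
Splitting `C` on a point `x` where `A` and `B` disagree gives two nonempty halves; if both
had the Littlestone dimension of `C`, the trees witnessing it could be hung below a root
labelled `x` to give a taller tree for `C`. So at every `x ∈ Δ(A,B)` the two drops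
`Ldim C − Ldim C_{x=B(x)}` and `Ldim C − Ldim C_{x=A(x)}` are nonnegative integers summing
to at least `1`, and so does their `μ`-average over `Δ(A,B)`, which is `d(A,B) + d(B,A)`.
On a finite `X` no dimension is `⊤` (a tree of height `d` carries `2^d` distinct concepts),
so taking `toNat` loses nothing.
-/

theorem List.exists_take_eq_getD_ne {α : Type*} (d : α) :
    ∀ {l l' : List α}, l.length = l'.length → l ≠ l' →
      ∃ k < l.length, l.take k = l'.take k ∧ l.getD k d ≠ l'.getD k d
  | [], [], _, hne => absurd rfl hne
  | a :: l, b :: l', hlen, hne => by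
    by_cases hab : a = b
    · subst hab
      obtain ⟨k, hk, htake, hget⟩ :=
        exists_take_eq_getD_ne d (by simpa using hlen) (by simpa using hne)
      exact ⟨k + 1, by simpa using hk, by simp [htake], by simpa using hget⟩
    · exact ⟨0, by simp, by simp, by simpa using hab⟩

section Littlestone

variable {X : Type*} {C C' : Set (X → Bool)} {d : ℕ}

theorem LdimGe.zero [Nonempty X] (hC : C.Nonempty) : LdimGe C 0 :=
  ⟨fun _ => Classical.arbitrary X, fun _ _ => ⟨hC.some, hC.some_mem, by simp⟩⟩

theorem LdimGe.mono (h : C' ⊆ C) (hd : LdimGe C' d) : LdimGe C d := by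
  obtain ⟨t, ht⟩ := hd
  refine ⟨t, fun σ hσ => ?_⟩
  obtain ⟨f, hf, hpath⟩ := ht σ hσ
  exact ⟨f, h hf, hpath⟩

theorem LdimGe.succ_of_restrict {x : X} (h : ∀ b, LdimGe {f ∈ C | f x = b} d) :
    LdimGe C (d + 1) := by
  choose t ht using h
  refine ⟨fun | [] => x | b :: σ => t b σ, ?_⟩
  rintro (_ | ⟨b, σ⟩) hσ
  · simp at hσ
  obtain ⟨f, ⟨hfC, hfx⟩, hpath⟩ := ht b σ (by simpa using hσ)
  exact ⟨f, hfC, fun | 0, _ => by simpa using hfx | k + 1, hk => by simpa using hpath k (by omega)⟩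

theorem LdimGe.le_card [Fintype X] (h : LdimGe C d) : d ≤ Fintype.card X := by
  classical
  obtain ⟨t, ht⟩ := h
  choose leaf _ hleaf using fun σ : List.Vector Bool d => ht σ.1 σ.2
  have hinj : Function.Injective leaf := by
    intro σ σ' heq
    by_contra hne
    obtain ⟨k, hk, htake, hget⟩ := List.exists_take_eq_getD_ne false (σ.2.trans σ'.2.symm)
      (mt Subtype.ext hne)
    have hkd : k < d := σ.2 ▸ hk
    exact hget (by rw [← hleaf σ k hkd, ← hleaf σ' k hkd, heq, htake])
  have hcard := Fintype.card_le_of_injective leaf hinj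
  simp only [card_vector, Fintype.card_fun, Fintype.card_bool] at hcard
  exact (Nat.pow_le_pow_iff_right (by norm_num)).mp hcard

theorem ldim_mono (h : C' ⊆ C) : Ldim C' ≤ Ldim C :=
  sSup_le_sSup fun _ ⟨d, hn, hd⟩ => ⟨d, hn, hd.mono h⟩

variable [Fintype X]

theorem bddAbove_ldimGe (C : Set (X → Bool)) : BddAbove {d | LdimGe C d} :=
  ⟨Fintype.card X, fun _ => LdimGe.le_card⟩

theorem ldim_eq_natCast_sSup (C : Set (X → Bool)) :
    Ldim C = ((sSup {d | LdimGe C d} : ℕ) : ℕ∞) := by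
  rw [ENat.natCast_sSup (bddAbove_ldimGe C), ← sSup_image, Ldim]
  congr 1
  ext
  exact exists_congr fun _ => by rw [and_comm, eq_comm, Set.mem_ofPred_eq]

theorem toNat_ldim (C : Set (X → Bool)) : (Ldim C).toNat = sSup {d | LdimGe C d} := by
  rw [ldim_eq_natCast_sSup, ENat.toNat_natCast]

theorem toNat_ldim_mono (h : C' ⊆ C) : (Ldim C').toNat ≤ (Ldim C).toNat :=
  ENat.toNat_le_toNat (ldim_mono h) (by simp [ldim_eq_natCast_sSup])

theorem LdimGe.le_toNat_ldim (h : LdimGe C d) : d ≤ (Ldim C).toNat :=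
  toNat_ldim C ▸ le_csSup (bddAbove_ldimGe C) h

theorem ldimGe_toNat_ldim [Nonempty X] (hC : C.Nonempty) : LdimGe C (Ldim C).toNat :=
  toNat_ldim C ▸ Nat.sSup_mem ⟨0, LdimGe.zero hC⟩ (bddAbove_ldimGe C)

theorem toNat_ldim_restrict_lt_or_lt {A B : X → Bool} {x : X} (hA : A ∈ C) (hB : B ∈ C)
    (hx : A x ≠ B x) :
    (Ldim {f ∈ C | f x = A x}).toNat < (Ldim C).toNat ∨
      (Ldim {f ∈ C | f x = B x}).toNat < (Ldim C).toNat := by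
  have : Nonempty X := ⟨x⟩
  have restrict_ldimGe (F : X → Bool) (hF : F ∈ C)
      (hge : (Ldim C).toNat ≤ (Ldim {f ∈ C | f x = F x}).toNat) :
      LdimGe {f ∈ C | f x = F x} (Ldim C).toNat :=
    le_antisymm (toNat_ldim_mono (Set.sep_subset _ _)) hge ▸ ldimGe_toNat_ldim ⟨F, hF, rfl⟩
  by_contra! hge
  have htaller : LdimGe C ((Ldim C).toNat + 1) := LdimGe.succ_of_restrict (x := x) fun b => by
    obtain rfl | rfl : b = A x ∨ b = B x := by
      revert hx; cases b <;> cases A x <;> cases B x <;> decide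
    exacts [restrict_ldimGe A hA hge.1, restrict_ldimGe B hB hge.2]
  exact (Nat.lt_succ_self _).not_ge htaller.le_toNat_ldim

theorem one_le_ldim_drop_add_ldim_drop {A B : X → Bool} {x : X} (hA : A ∈ C) (hB : B ∈ C)
    (hx : A x ≠ B x) :
    1 ≤ ((Ldim C).toNat : ℝ) - (Ldim {f ∈ C | f x = B x}).toNat +
      (((Ldim C).toNat : ℝ) - (Ldim {f ∈ C | f x = A x}).toNat) := by
  have hleA := toNat_ldim_mono (Set.sep_subset C fun f => f x = A x)
  have hleB := toNat_ldim_mono (Set.sep_subset C fun f => f x = B x)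
  have hsum : (Ldim {f ∈ C | f x = A x}).toNat + (Ldim {f ∈ C | f x = B x}).toNat + 1 ≤
      2 * (Ldim C).toNat := by
    rcases toNat_ldim_restrict_lt_or_lt hA hB hx with h | h <;> omega
  have hsumℝ := (Nat.cast_le (α := ℝ)).mpr hsum
  push_cast at hsumℝ
  linarith

end Littlestone

theorem one_le_sum_div_sum_mul {ι : Type*} {s : Finset ι} {w g : ι → ℝ} (hs : s.Nonempty)
    (hw : ∀ i ∈ s, 0 < w i) (hg : ∀ i ∈ s, 1 ≤ g i) :
    1 ≤ ∑ i ∈ s, w i / (∑ j ∈ s, w j) * g i := by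
  have hS : 0 < ∑ j ∈ s, w j := Finset.sum_pos hw hs
  calc 1 = ∑ i ∈ s, w i / ∑ j ∈ s, w j := by rw [← Finset.sum_div, div_self hS.ne']
    _ ≤ ∑ i ∈ s, w i / (∑ j ∈ s, w j) * g i :=
      Finset.sum_le_sum fun i hi => le_mul_of_one_le_right (div_pos (hw i hi) hS).le (hg i hi)

theorem stmt_17_general {X : Type*} [Fintype X] (C : Set (X → Bool)) (μ : X → ℝ)
    (hpos : ∀ x, 0 < μ x)
    (A B : X → Bool) (hA : A ∈ C) (hB : B ∈ C) (hAB : A ≠ B) :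
    1 ≤ edgeWeight C μ A B + edgeWeight C μ B A := by
  have hΔ_symm :
      Finset.univ.filter (fun x => B x ≠ A x) = Finset.univ.filter (fun x => A x ≠ B x) :=
    Finset.filter_congr fun _ _ => ne_comm
  have hΔ_nonempty : (Finset.univ.filter (fun x => A x ≠ B x)).Nonempty := by
    obtain ⟨x, hx⟩ := Function.ne_iff.mp hAB
    exact ⟨x, by simpa using hx⟩
  rw [edgeWeight, edgeWeight, hΔ_symm, ← Finset.sum_add_distrib]
  simp_rw [← mul_add]
  exact one_le_sum_div_sum_mul hΔ_nonempty (fun a _ => hpos a) fun a ha =>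
    one_le_ldim_drop_add_ldim_drop hA hB (Finset.mem_filter.mp ha).2

theorem stmt_17 {X : Type*} [Fintype X] (C : Set (X → Bool)) (μ : X → ℝ)
    (hpos : ∀ x, 0 < μ x) (hsum : ∑ x, μ x = 1)
    (A B : X → Bool) (hA : A ∈ C) (hB : B ∈ C) (hAB : A ≠ B) :
    1 ≤ edgeWeight C μ A B + edgeWeight C μ B A :=
  stmt_17_general C μ hpos A B hA hB hAB
end
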